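/- arXiv:1403.3769 — 2 statements merged into one kernel-verified Lean document; each statement's English description precedes it below -/
import Mathlib

section
/- Let G be an AG-group with left identity e and μ a normal fuzzy AG-subgroup of G. If x, y, x', y' ∈ G satisfy μ_x = μ_{x'} and μ_y = μ_{y'} (as functions on G), then μ((x⁻¹·y⁻¹)·(x'·y')) = μ(e). -/
/-- An AG-group: a groupoid satisfying the left invertive law, with a left
identity `e` and two-sided inverses. -/
class AGGroup (G : Type*) where
  mul : G → G → G
  e : G
  inv : G → G
  left_invertive : ∀ a b c : G, mul (mul a b) c = mul (mul c b) a
  left_id : ∀ a : G, mul e a = a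
  inv_mul : ∀ a : G, mul (inv a) a = e
  mul_inv : ∀ a : G, mul a (inv a) = e

namespace AGGroup

variable {G : Type*} [AGGroup G]

/-- A fuzzy AG-subgroup: a fuzzy subset (a map into `[0,1]`) with
`μ(xy) ≥ min (μ x) (μ y)` and `μ x⁻¹ ≥ μ x`. -/
def IsFuzzyAGSubgroup (μ : G → ℝ) : Prop :=
  (∀ x : G, μ x ∈ Set.Icc (0 : ℝ) 1) ∧
  (∀ x y : G, μ (mul x y) ≥ min (μ x) (μ y)) ∧
  (∀ x : G, μ (inv x) ≥ μ x)

/-- A normal fuzzy AG-subgroup: a fuzzy AG-subgroup with `μ((xy)x⁻¹) = μ y`. -/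
def IsNormalFuzzyAGSubgroup (μ : G → ℝ) : Prop :=
  IsFuzzyAGSubgroup μ ∧ ∀ x y : G, μ (mul (mul x y) (inv x)) = μ y

/-- The fuzzy coset `μ_x`, given by `μ_x g = μ (g x⁻¹)`. -/
def fuzzyCoset (μ : G → ℝ) (x : G) : G → ℝ :=
  fun g => μ (mul g (inv x))

/-- The level set `μ* = {a : μ a = μ e}` of a fuzzy AG-subgroup. -/
def levelSet (μ : G → ℝ) : Set G := {a : G | μ a = μ e}

/-- The right coset `S x = {s x : s ∈ S}` of a subset `S`. -/
def rightCoset (S : Set G) (x : G) : Set G := (fun s => mul s x) '' S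

/-- An AG-subgroup: a nonempty subset closed under the operation and inverses. -/
def IsAGSubgroup (H : Set G) : Prop :=
  H.Nonempty ∧ (∀ a ∈ H, ∀ b ∈ H, mul a b ∈ H) ∧ (∀ a ∈ H, inv a ∈ H)

end AGGroup

open AGGroup

section Aux

variable {G : Type*} [AGGroup G]

lemma agAux_inv_e : (inv (e : G)) = (e : G) := by
  have h1 := mul_inv (e : G)
  have h2 := left_id (inv (e : G))
  rw [h2] at h1; exact h1

lemma agAux_medial (a b c d : G) :
    mul (mul a b) (mul c d) = mul (mul a c) (mul b d) := by
  rw [left_invertive a b (mul c d), left_invertive c d b,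
    left_invertive (mul b d) c a]

lemma agAux_mu_comm (μ : G → ℝ) (hμ : IsNormalFuzzyAGSubgroup μ)
    (a b : G) : μ (mul a b) = μ (mul b a) := by
  have he : μ (mul (mul b a) e) = μ (mul b a) := by
    have := hμ.2 e (mul b a)
    rwa [left_id, agAux_inv_e] at this
  have hab : mul a b = mul (mul b a) e := by
    rw [left_invertive b a e, left_id]
  rw [hab, he]

lemma agAux_mu_le_e (μ : G → ℝ) (hμ : IsNormalFuzzyAGSubgroup μ) (a : G) :
    μ a ≤ μ (e : G) := by
  have h := hμ.1.2.1 a (inv a)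
  rw [AGGroup.mul_inv] at h
  exact le_trans (le_min le_rfl (hμ.1.2.2 a)) h

end Aux

/-- if `μ_x = μ_{x'}` and `μ_y = μ_{y'}` then
`μ((x⁻¹·y⁻¹)·(x'·y')) = μ e`. -/
theorem fuzzy_inv_mul_eq_e {G : Type*} [AGGroup G] (μ : G → ℝ)
    (hμ : IsNormalFuzzyAGSubgroup μ) (x y x' y' : G)
    (hx : fuzzyCoset μ x = fuzzyCoset μ x')
    (hy : fuzzyCoset μ y = fuzzyCoset μ y') :
    μ (mul (mul (inv x) (inv y)) (mul x' y')) = μ (e : G) := by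
  have hx' : μ (mul (inv x) x') = μ (e : G) := by
    have h := congrFun hx x'
    simp only [fuzzyCoset] at h
    rw [agAux_mu_comm μ hμ, h, AGGroup.mul_inv]
  have hy' : μ (mul (inv y) y') = μ (e : G) := by
    have h := congrFun hy y'
    simp only [fuzzyCoset] at h
    rw [agAux_mu_comm μ hμ, h, AGGroup.mul_inv]
  rw [agAux_medial]
  refine le_antisymm (agAux_mu_le_e μ hμ _) ?_
  have h := hμ.1.2.1 (mul (inv x) x') (mul (inv y) y')
  rw [hx', hy', min_self] at h
  exact h
end

section
/- (Fuzzy Lagrange's Theorem for AG-groups.) Let G be a finite AG-group and μ a fuzzy AG-subgroup of G. Then the number of distinct fuzzy cosets of μ, i.e. the cardinality of the set {μ_x : x ∈ G}, divides the order of G. -/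
namespace AGGroup

variable {G : Type*} [AGGroup G]

lemma medial (a b c d : G) :
    mul (mul a b) (mul c d) = mul (mul a c) (mul b d) := by
  rw [left_invertive a b (mul c d), left_invertive c d b,
    left_invertive (mul b d) c a]

lemma swap (a b c : G) : mul a (mul b c) = mul b (mul a c) := by
  calc mul a (mul b c) = mul (mul e a) (mul b c) := by rw [left_id]
    _ = mul (mul e b) (mul a c) := medial e a b c
    _ = mul b (mul a c) := by rw [left_id]

lemma theta_theta (a : G) : mul (mul a e) e = a := by
  rw [left_invertive, left_id e, left_id]

noncomputable def agACG (G : Type*) [AGGroup G] : AddCommGroup G :=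
  letI : Zero G := ⟨e⟩
  letI : Add G := ⟨fun a b => mul (mul a e) b⟩
  letI : Neg G := ⟨fun a => mul (inv a) e⟩
  { add := (· + ·)
    zero := 0
    neg := Neg.neg
    nsmul := nsmulRec
    zsmul := zsmulRec
    add_assoc := fun a b c => by
      show mul (mul (mul (mul a e) b) e) c = mul (mul a e) (mul (mul b e) c)
      rw [left_invertive (mul a e) b e, left_id, medial a e (mul b e) c,
        left_id, swap a b e]
    zero_add := fun a => by show mul (mul e e) a = a; rw [left_id e, left_id]
    add_zero := fun a => by
      show mul (mul a e) e = a
      exact theta_theta a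
    add_comm := fun a b => by
      show mul (mul a e) b = mul (mul b e) a
      exact left_invertive a e b
    neg_add_cancel := fun a => by
      show mul (mul (mul (inv a) e) e) a = e
      rw [theta_theta]; exact inv_mul a }

attribute [local instance] agACG

lemma mul_eq (a b : G) : mul a b = mul a e + b := by
  show mul a b = mul (mul (mul a e) e) b
  rw [theta_theta]

lemma inv_eq (a : G) : inv a = mul (-a) e := by
  show inv a = mul (mul (inv a) e) e
  exact (theta_theta (inv a)).symm

lemma theta_add (a b : G) : mul (a + b) e = mul a e + mul b e := by
  show mul (mul (mul a e) b) e = mul a e + mul b e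
  rw [left_invertive (mul a e) b e, left_id]
  show mul b (mul a e) = mul (mul (mul a e) e) (mul b e)
  rw [theta_theta]
  exact swap b a e

lemma key_id (g t d : G) : mul g (inv (t + d)) = mul (g + -d) (inv t) := by
  rw [mul_eq g, mul_eq (g + -d), inv_eq (t + d), inv_eq t]
  have h1 : -(t + d) = -t + -d := by abel
  rw [h1, theta_add, theta_add]
  abel

lemma coset_shift (μ : G → ℝ) (t a d : G)
    (h : fuzzyCoset μ t = fuzzyCoset μ a) :
    fuzzyCoset μ (t + d) = fuzzyCoset μ (a + d) := by
  funext g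
  show μ (mul g (inv (t + d))) = μ (mul g (inv (a + d)))
  rw [key_id g t d, key_id g a d]
  exact congrFun h (g + -d)

end AGGroup

open AGGroup

/-- Fuzzy Lagrange's theorem: for a finite AG-group `G` and
fuzzy AG-subgroup `μ`, the number of distinct fuzzy cosets of `μ` divides the
order of `G`. -/
theorem fuzzy_lagrange {G : Type*} [AGGroup G] [Fintype G] (μ : G → ℝ)
    (hμ : IsFuzzyAGSubgroup μ) :
    Nat.card {f : G → ℝ // ∃ x : G, f = fuzzyCoset μ x} ∣ Fintype.card G := by
  classical
  letI := agACG G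
  set c : G → (G → ℝ) := fuzzyCoset μ with hc
  -- the number of distinct cosets is the cardinality of the image of `c`
  have h1 : Nat.card {f : G → ℝ // ∃ x : G, f = fuzzyCoset μ x}
      = (Finset.univ.image c).card := by
    have e1 : {f : G → ℝ // ∃ x : G, f = fuzzyCoset μ x}
        ≃ {f : G → ℝ // f ∈ Finset.univ.image c} :=
      Equiv.subtypeEquivRight (by intro f; simp [hc, eq_comm])
    rw [Nat.card_congr e1, Nat.card_eq_fintype_card, Fintype.card_coe]
  -- all fibers of `c` have the same cardinality
  have hk : ∀ a b : G,
      (Finset.univ.filter fun t => c t = c a).card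
        = (Finset.univ.filter fun t => c t = c b).card := by
    intro a b
    refine Finset.card_bij' (fun t _ => t + (-a + b)) (fun s _ => s + (-b + a))
      ?_ ?_ ?_ ?_
    · intro t ht
      rw [Finset.mem_filter] at ht ⊢
      refine ⟨Finset.mem_univ _, ?_⟩
      have := coset_shift μ t a (-a + b) ht.2
      rwa [show a + (-a + b) = b by abel] at this
    · intro s hs
      rw [Finset.mem_filter] at hs ⊢
      refine ⟨Finset.mem_univ _, ?_⟩
      have := coset_shift μ s b (-b + a) hs.2
      rwa [show b + (-b + a) = a by abel] at this
    · intro t _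
      show t + (-a + b) + (-b + a) = t
      rw [add_assoc, add_assoc, add_neg_cancel_left, neg_add_cancel, add_zero]
    · intro s _
      show s + (-b + a) + (-a + b) = s
      rw [add_assoc, add_assoc, add_neg_cancel_left, neg_add_cancel, add_zero]
  -- fiberwise counting
  have h2 : Fintype.card G
      = (Finset.univ.image c).card
        * (Finset.univ.filter fun t => c t = c (e : G)).card := by
    rw [← Finset.card_univ,
      Finset.card_eq_sum_card_fiberwise
        (fun x _ => Finset.mem_image_of_mem c (Finset.mem_univ x))]
    rw [Finset.sum_congr rfl (fun y hy => ?_), Finset.sum_const, smul_eq_mul]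
    obtain ⟨a, -, rfl⟩ := Finset.mem_image.1 hy
    exact hk a e
  rw [h1, h2]
  exact dvd_mul_right _ _
end
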